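/- arXiv:1104.2821 — 3 statements merged into one kernel-verified Lean document; each statement's English description precedes it below -/
import Mathlib

section
/- Let w : Set (Fin n) → {a,b} be nondecreasing and nonconstant with dual w*(A) = b if w([n]∖A) = a, and a otherwise. Then the disjunctive and conjunctive normal forms agree: for all t ∈ L^n, ⋁_{A : w(A)=b} ⋀_{i∈A} t_i = ⋀_{A : w*(A)=b} ⋁_{i∈A} t_i. -/
/-- The disjunctive and conjunctive normal forms of a lattice polynomial agree:
for a nondecreasing, nonconstant `{⊥,⊤}`-valued set function `w` with dual
`w*(A) = ⊤ ⟺ w([n]∖A) = ⊥`,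
`⋁_{A : w A = ⊤} ⋀_{i∈A} t_i = ⋀_{A : w* A = ⊤} ⋁_{i∈A} t_i`. -/
theorem latticePolynomial_dnf_eq_cnf {n : ℕ} {L : Type*} [LinearOrder L]
    [OrderBot L] [OrderTop L] [DecidableEq L] (hab : (⊥ : L) ≠ ⊤)
    (w : Finset (Fin n) → L)
    (hrange : ∀ A, w A = ⊥ ∨ w A = ⊤)
    (hmono : ∀ A B : Finset (Fin n), A ⊆ B → w A ≤ w B)
    (hnonconst : ∃ A B : Finset (Fin n), w A ≠ w B)
    (t : Fin n → L) :
    (Finset.univ.filter (fun A : Finset (Fin n) => w A = ⊤)).sup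
        (fun A => A.inf t) =
      (Finset.univ.filter (fun A : Finset (Fin n) => w Aᶜ = ⊥)).inf
        (fun A => A.sup t) := by
  apply le_antisymm
  · apply Finset.sup_le
    intro A hA
    apply Finset.le_inf
    intro B hB
    simp only [Finset.mem_filter, Finset.mem_univ, true_and] at hA hB
    have hns : ¬ A ⊆ Bᶜ := by
      intro h
      have := hmono A Bᶜ h
      rw [hA, hB] at this
      exact hab (top_le_iff.mp this)
    obtain ⟨i, hiA, hiB⟩ := Finset.not_subset.mp hns
    simp only [Finset.mem_compl, not_not] at hiB
    exact le_trans (Finset.inf_le hiA) (Finset.le_sup hiB)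
  · set c := (Finset.univ.filter (fun A : Finset (Fin n) => w Aᶜ = ⊥)).inf
        (fun A => A.sup t) with hc
    by_cases hcb : c = ⊥
    · rw [hcb]; exact bot_le
    · set A₀ : Finset (Fin n) := Finset.univ.filter (fun i => c ≤ t i) with hA₀
      have hwA₀ : w A₀ = ⊤ := by
        rcases hrange A₀ with h | h
        · exfalso
          have hmem : A₀ᶜ ∈ Finset.univ.filter (fun A : Finset (Fin n) => w Aᶜ = ⊥) := by
            simp only [Finset.mem_filter, Finset.mem_univ, true_and, compl_compl]
            exact h
          have h1 : c ≤ A₀ᶜ.sup t := Finset.inf_le hmem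
          have h2 : A₀ᶜ.sup t < c := by
            rw [Finset.sup_lt_iff (lt_of_le_of_ne bot_le (Ne.symm hcb))]
            intro i hi
            simp only [hA₀, Finset.mem_compl, Finset.mem_filter, Finset.mem_univ,
              true_and, not_le] at hi
            exact hi
          exact absurd h1 (not_le.mpr h2)
        · exact h
      have hmem : A₀ ∈ Finset.univ.filter (fun A : Finset (Fin n) => w A = ⊤) := by
        simp only [Finset.mem_filter, Finset.mem_univ, true_and]; exact hwA₀
      refine le_trans ?_ (Finset.le_sup hmem)
      apply Finset.le_inf
      intro i hi
      simp only [hA₀, Finset.mem_filter, Finset.mem_univ, true_and] at hi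
      exact hi
end

section
/- With the same setup and v* the dual of v, R_S(t) = 1 - Σ_{A⊆[n]} v*(A) · P(X(t) = e_{[n]∖A}^{0,1}) for all t ≥ 0. -/
open scoped ENNReal
open MeasureTheory

/-- Dual reliability formula: `R_S(t) = 1 - Σ_A v*(A) P(X(t) = e_{[n]∖A})`,
where `v*(A) = 1 - v([n]∖A)` is the dual set function. -/
theorem reliability_dual {n : ℕ} {Ω : Type*} [MeasurableSpace Ω]
    (μ : MeasureTheory.Measure Ω) [MeasureTheory.IsProbabilityMeasure μ]
    (T : Fin n → Ω → ℝ≥0∞) (hT : ∀ i, Measurable (T i))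
    (v : Finset (Fin n) → ℝ≥0∞)
    (hv : ∀ A, v A = 0 ∨ v A = 1)
    (hmono : ∀ A B : Finset (Fin n), A ⊆ B → v A ≤ v B)
    (hnonconst : ∃ A B : Finset (Fin n), v A ≠ v B)
    (t : ℝ≥0∞) (ht : 0 ≤ t) :
    μ {ω | (Finset.univ.filter (fun A : Finset (Fin n) => v A = 1)).sup
        (fun A => A.inf (fun i => T i ω)) > t} =
      1 - ∑ A : Finset (Fin n), (1 - v Aᶜ) * μ {ω | ∀ i, T i ω > t ↔ i ∈ Aᶜ} := by
  classical
  set Bf : Ω → Finset (Fin n) := fun ω => Finset.univ.filter (fun i => t < T i ω) with hBf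
  set F : Finset (Fin n) → Set Ω := fun B => {ω | ∀ i, T i ω > t ↔ i ∈ B} with hF
  have hvle : ∀ A, v A ≤ 1 := fun A => by rcases hv A with h | h <;> simp [h]
  have hv0 : v ∅ = 0 := by
    rcases hv ∅ with h0 | h1
    · exact h0
    · obtain ⟨A, B, hAB⟩ := hnonconst
      have hA : v A = 1 :=
        le_antisymm (hvle A) (h1 ▸ hmono ∅ A (Finset.empty_subset A))
      have hB : v B = 1 :=
        le_antisymm (hvle B) (h1 ▸ hmono ∅ B (Finset.empty_subset B))
      exact absurd (hA.trans hB.symm) hAB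
  -- measurability of the atoms
  have hFmeas : ∀ B, MeasurableSet (F B) := by
    intro B
    have hFe : F B = ⋂ i, {ω | t < T i ω ↔ i ∈ B} := by
      ext ω; simp [hF, Set.mem_iInter]
    rw [hFe]
    refine MeasurableSet.iInter fun i => ?_
    by_cases hi : i ∈ B
    · simp only [hi, iff_true]
      exact measurableSet_lt measurable_const (hT i)
    · simp only [hi, iff_false, not_lt]
      exact measurableSet_le (hT i) measurable_const
  -- atoms characterized by Bf
  have hFB : ∀ ω B, ω ∈ F B ↔ Bf ω = B := by
    intro ω B
    simp only [hF, Set.mem_setOf_eq, hBf]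
    rw [Finset.ext_iff]
    simp
  have hdisj : ∀ B C : Finset (Fin n), B ≠ C → Disjoint (F B) (F C) := by
    intro B C hBC
    rw [Set.disjoint_left]
    intro ω hωB hωC
    exact hBC (((hFB ω B).1 hωB).symm.trans ((hFB ω C).1 hωC))
  have hcover : ∀ ω, ω ∈ F (Bf ω) := fun ω => (hFB ω (Bf ω)).2 rfl
  -- key equivalence
  have hkey : ∀ ω, (t < (Finset.univ.filter (fun A : Finset (Fin n) => v A = 1)).sup
      (fun A => A.inf (fun i => T i ω))) ↔ v (Bf ω) = 1 := by
    intro ω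
    constructor
    · intro h
      rw [Finset.lt_sup_iff] at h
      obtain ⟨A, hA, hlt⟩ := h
      rw [Finset.mem_filter] at hA
      have hsub : A ⊆ Bf ω := by
        intro i hi
        simp only [hBf, Finset.mem_filter, Finset.mem_univ, true_and]
        exact lt_of_lt_of_le hlt (Finset.inf_le hi)
      have := hmono A (Bf ω) hsub
      rw [hA.2] at this
      exact le_antisymm (hvle _) this
    · intro h
      have hne : (Bf ω).Nonempty := by
        rcases Finset.eq_empty_or_nonempty (Bf ω) with he | h'
        · rw [he] at h; exact absurd h (by simp [hv0])
        · exact h'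
      rw [Finset.lt_sup_iff]
      refine ⟨Bf ω, Finset.mem_filter.mpr ⟨Finset.mem_univ _, h⟩, ?_⟩
      rw [← Finset.inf'_eq_inf hne, Finset.lt_inf'_iff]
      intro i hi
      simpa [hBf] using hi
  -- LHS as a sum
  have hset : {ω | (Finset.univ.filter (fun A : Finset (Fin n) => v A = 1)).sup
      (fun A => A.inf (fun i => T i ω)) > t} =
      ⋃ B ∈ Finset.univ.filter (fun B : Finset (Fin n) => v B = 1), F B := by
    ext ω
    simp only [Set.mem_setOf_eq, gt_iff_lt, Set.mem_iUnion, Finset.mem_filter,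
      Finset.mem_univ, true_and, exists_prop]
    rw [hkey ω]
    constructor
    · intro h; exact ⟨Bf ω, h, hcover ω⟩
    · rintro ⟨B, hB, hωB⟩; rw [(hFB ω B).1 hωB]; exact hB
  have hLHS : μ {ω | (Finset.univ.filter (fun A : Finset (Fin n) => v A = 1)).sup
      (fun A => A.inf (fun i => T i ω)) > t} =
      ∑ B ∈ Finset.univ.filter (fun B : Finset (Fin n) => v B = 1), μ (F B) := by
    rw [hset]
    exact measure_biUnion_finset
      (fun B _ C _ hBC => hdisj B C hBC) (fun B _ => hFmeas B)
  -- total mass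
  have htot : ∑ B : Finset (Fin n), μ (F B) = 1 := by
    have huniv : ⋃ B ∈ (Finset.univ : Finset (Finset (Fin n))), F B = Set.univ :=
      Set.eq_univ_of_forall fun ω => Set.mem_biUnion (Finset.mem_univ _) (hcover ω)
    calc ∑ B : Finset (Fin n), μ (F B)
        = μ (⋃ B ∈ (Finset.univ : Finset (Finset (Fin n))), F B) :=
          (measure_biUnion_finset (fun B _ C _ hBC => hdisj B C hBC)
            (fun B _ => hFmeas B)).symm
      _ = 1 := by rw [huniv, measure_univ]
  -- rewrite RHS sum
  have hsum : ∑ A : Finset (Fin n), (1 - v Aᶜ) * μ {ω | ∀ i, T i ω > t ↔ i ∈ Aᶜ} =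
      ∑ B : Finset (Fin n), (1 - v B) * μ (F B) := by
    exact Fintype.sum_bijective compl (Function.Involutive.bijective compl_compl)
      _ _ (fun A => rfl)
  have hsplit : ∑ B : Finset (Fin n), (1 - v B) * μ (F B) =
      ∑ B ∈ Finset.univ.filter (fun B : Finset (Fin n) => ¬ v B = 1), μ (F B) := by
    rw [← Finset.sum_filter_add_sum_filter_not Finset.univ (fun B => v B = 1)]
    have h1 : ∑ B ∈ Finset.univ.filter (fun B : Finset (Fin n) => v B = 1),
        (1 - v B) * μ (F B) = 0 := by
      apply Finset.sum_eq_zero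
      intro B hB
      rw [Finset.mem_filter] at hB
      simp [hB.2]
    have h2 : ∑ B ∈ Finset.univ.filter (fun B : Finset (Fin n) => ¬ v B = 1),
        (1 - v B) * μ (F B) =
        ∑ B ∈ Finset.univ.filter (fun B : Finset (Fin n) => ¬ v B = 1), μ (F B) := by
      apply Finset.sum_congr rfl
      intro B hB
      rw [Finset.mem_filter] at hB
      have : v B = 0 := (hv B).resolve_right hB.2
      simp [this]
    rw [h1, h2, zero_add]
  rw [hLHS, hsum, hsplit]
  have hadd : (∑ B ∈ Finset.univ.filter (fun B : Finset (Fin n) => v B = 1), μ (F B)) +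
      (∑ B ∈ Finset.univ.filter (fun B : Finset (Fin n) => ¬ v B = 1), μ (F B)) = 1 := by
    rw [Finset.sum_filter_add_sum_filter_not]
    exact htot
  have hne : (∑ B ∈ Finset.univ.filter (fun B : Finset (Fin n) => ¬ v B = 1), μ (F B)) ≠ ⊤ := by
    refine ne_top_of_le_ne_top (by norm_num : (1 : ℝ≥0∞) ≠ ⊤) ?_
    calc ∑ B ∈ Finset.univ.filter (fun B : Finset (Fin n) => ¬ v B = 1), μ (F B)
        ≤ ∑ B : Finset (Fin n), μ (F B) :=
          Finset.sum_le_sum_of_subset (Finset.filter_subset _ _)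
      _ = 1 := htot
  exact ENNReal.eq_sub_of_add_eq hne hadd
end

section
/- With T_S = ⋁_{A:v(A)=1}⋀_{i∈A}T_i and R(e_A^{0,t}) := P(T_i > t for all i ∈ A) (joint survival at the vector which is t on A and 0 off A), the reliability satisfies R_S(t) = Σ_{A⊆[n]} m_v(A) · R(e_A^{0,t}), where m_v is the Möbius transform of v. (Note R(e_∅) = 1.) -/
open scoped ENNReal

/-- The Möbius transform of a set function `v : 2^[n] → ℤ`. -/
def mobiusTransform {n : ℕ} (v : Finset (Fin n) → ℤ) (A : Finset (Fin n)) : ℤ :=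
  ∑ B ∈ A.powerset, (-1) ^ (A.card - B.card) * v B

/-!
Let `S ω = {i | t < T i ω}` be the random set of components still working at time `t`. As `v` is
a monotone `0/1` function with `v ∅ = 0`, the system works at time `t` exactly when `v (S ω) = 1`,
while `{∀ i ∈ A, T i > t} = {A ⊆ S}`. Möbius inversion gives `v (S ω) = ∑_{A ⊆ S ω} m_v(A)`
pointwise, and integrating this identity against `μ` yields the formula.
-/

open Finset MeasureTheory

theorem Finset.sum_Icc_neg_one_pow_card_sub {α : Type*} [DecidableEq α] {C A : Finset α}
    (hCA : C ⊆ A) : ∑ B ∈ Icc C A, (-1 : ℤ) ^ (B.card - C.card) = if C = A then 1 else 0 := by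
  have hinj : Set.InjOn (C ∪ ·) ((A \ C).powerset : Set (Finset α)) := fun D hD E hE hDE => by
    simp only [coe_powerset, Set.mem_preimage, Set.mem_powerset_iff, coe_subset] at hD hE
    rw [← union_sdiff_cancel_left (disjoint_of_subset_right hD disjoint_sdiff),
      ← union_sdiff_cancel_left (disjoint_of_subset_right hE disjoint_sdiff)]
    exact congrArg (· \ C) hDE
  rw [Icc_eq_image_powerset hCA, sum_image hinj]
  calc ∑ D ∈ (A \ C).powerset, (-1 : ℤ) ^ ((C ∪ D).card - C.card)
      = ∑ D ∈ (A \ C).powerset, (-1 : ℤ) ^ D.card := sum_congr rfl fun D hD => by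
        rw [card_union_of_disjoint (disjoint_of_subset_right (mem_powerset.mp hD) disjoint_sdiff),
          Nat.add_sub_cancel_left]
    _ = if C = A then 1 else 0 := by
        rw [sum_powerset_neg_one_pow_card]
        exact if_congr (sdiff_eq_empty_iff_subset.trans ⟨hCA.antisymm, fun h => h ▸ subset_rfl⟩)
          rfl rfl

theorem sum_powerset_mobiusTransform {n : ℕ} (v : Finset (Fin n) → ℤ) (A : Finset (Fin n)) :
    ∑ B ∈ A.powerset, mobiusTransform v B = v A := by
  calc ∑ B ∈ A.powerset, mobiusTransform v B
      = ∑ C ∈ A.powerset, ∑ B ∈ Icc C A, (-1) ^ (B.card - C.card) * v C := by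
        unfold mobiusTransform
        exact sum_comm' fun B C => by
          simp only [mem_powerset, mem_Icc]
          exact ⟨fun ⟨hBA, hCB⟩ => ⟨⟨hCB, hBA⟩, hCB.trans hBA⟩, fun ⟨⟨hCB, hBA⟩, _⟩ => ⟨hBA, hCB⟩⟩
    _ = ∑ C ∈ A.powerset, if C = A then v C else 0 := by
        refine sum_congr rfl fun C hC => ?_
        rw [← sum_mul, sum_Icc_neg_one_pow_card_sub (mem_powerset.mp hC), ite_mul, one_mul,
          zero_mul]
    _ = v A := by rw [sum_ite_eq', if_pos (mem_powerset_self A)]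

theorem Finset.lt_sup_inf_iff_filter_mem {ι α : Type*} [Fintype ι] [LinearOrder α]
    [BoundedOrder α] {𝒜 : Finset (Finset ι)} (h𝒜 : IsUpperSet (𝒜 : Set (Finset ι)))
    (hempty : ∅ ∉ 𝒜) (x : ι → α) (t : α) :
    t < 𝒜.sup (fun A => A.inf x) ↔ univ.filter (fun i => t < x i) ∈ 𝒜 := by
  rw [Finset.lt_sup_iff]
  constructor
  · rintro ⟨A, hA, htA⟩
    refine h𝒜 (fun i hi => ?_) hA
    exact mem_filter.mpr ⟨mem_univ i, htA.trans_le (inf_le hi)⟩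
  · intro hS
    obtain ⟨i, hi, hinf⟩ := exists_mem_eq_inf _
      (nonempty_iff_ne_empty.mpr fun h => hempty (h ▸ hS)) x
    exact ⟨_, hS, hinf ▸ (mem_filter.mp hi).2⟩

theorem measureReal_eq_sum_mobiusTransform_mul {n : ℕ} {Ω : Type*} [MeasurableSpace Ω]
    (μ : Measure Ω) [IsFiniteMeasure μ] (S : Ω → Finset (Fin n))
    (hS : ∀ A, MeasurableSet {ω | A ⊆ S ω}) (v : Finset (Fin n) → ℤ)
    (hv : ∀ A, v A = 0 ∨ v A = 1) (hup : ∀ A B, A ⊆ B → v A = 1 → v B = 1) :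
    μ.real {ω | v (S ω) = 1} = ∑ A, (mobiusTransform v A : ℝ) * μ.real {ω | A ⊆ S ω} := by
  have hmeas : MeasurableSet {ω | v (S ω) = 1} := by
    have : {ω | v (S ω) = 1} = ⋃ A ∈ univ.filter (fun A => v A = 1), {ω | A ⊆ S ω} := by
      ext ω
      simp only [Set.mem_ofPred_eq, Set.mem_iUnion, mem_filter, mem_univ, true_and, exists_prop]
      exact ⟨fun h => ⟨_, h, subset_rfl⟩, fun ⟨A, hA, hAS⟩ => hup A _ hAS hA⟩
    rw [this]
    exact measurableSet_biUnion _ fun A _ => hS A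
  have hpointwise : ∀ ω, ∑ A, (mobiusTransform v A : ℝ) * {ω | A ⊆ S ω}.indicator 1 ω
      = {ω | v (S ω) = 1}.indicator 1 ω := fun ω => by
    simp only [Set.indicator_apply, Set.mem_ofPred_eq, Pi.one_apply, mul_ite, mul_one, mul_zero]
    rw [← sum_filter, filter_subset_univ, ← Int.cast_sum, sum_powerset_mobiusTransform]
    rcases hv (S ω) with h | h <;> simp [h]
  calc μ.real {ω | v (S ω) = 1}
      = ∫ ω, ∑ A, (mobiusTransform v A : ℝ) * {ω | A ⊆ S ω}.indicator 1 ω ∂μ := by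
        simp only [hpointwise, integral_indicator_one hmeas]
    _ = ∑ A, (mobiusTransform v A : ℝ) * μ.real {ω | A ⊆ S ω} := by
        rw [integral_finsetSum _ fun A _ => ((integrable_const 1).indicator (hS A)).const_mul _]
        simp only [integral_const_mul, integral_indicator_one (hS _)]

theorem reliability_mobius_general {n : ℕ} {Ω : Type*} [MeasurableSpace Ω]
    (μ : MeasureTheory.Measure Ω) [MeasureTheory.IsProbabilityMeasure μ]
    (T : Fin n → Ω → ℝ≥0∞) (hT : ∀ i, Measurable (T i))
    (v : Finset (Fin n) → ℤ)
    (hv : ∀ A, v A = 0 ∨ v A = 1)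
    (hmono : ∀ A B : Finset (Fin n), A ⊆ B → v A ≤ v B)
    (hnonconst : ∃ A B : Finset (Fin n), v A ≠ v B)
    (t : ℝ≥0∞) :
    (μ {ω | (Finset.univ.filter (fun A : Finset (Fin n) => v A = 1)).sup
        (fun A => A.inf (fun i => T i ω)) > t}).toReal =
      ∑ A : Finset (Fin n), (mobiusTransform v A : ℝ) *
        (μ {ω | ∀ i ∈ A, T i ω > t}).toReal := by
  have hup : ∀ A B, A ⊆ B → v A = 1 → v B = 1 := fun A B hAB hA => by
    have := hmono A B hAB
    rcases hv B with h | h <;> omega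
  have hempty : v ∅ ≠ 1 := fun h => by
    obtain ⟨A, B, hAB⟩ := hnonconst
    exact hAB ((hup ∅ A A.empty_subset h).trans (hup ∅ B B.empty_subset h).symm)
  let S : Ω → Finset (Fin n) := fun ω => univ.filter (fun i => t < T i ω)
  have hsurvive : ∀ A, {ω | ∀ i ∈ A, T i ω > t} = {ω | A ⊆ S ω} := fun A => by
    ext ω
    simp [S, subset_iff]
  have hS : ∀ A, MeasurableSet {ω | A ⊆ S ω} := fun A => by
    rw [← hsurvive]
    simp only [gt_iff_lt, Set.ofPred_forall]
    exact measurableSet_biInter A fun i _ => measurableSet_lt measurable_const (hT i)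
  have hsystem : {ω | (univ.filter (fun A => v A = 1)).sup (fun A => A.inf (T · ω)) > t}
      = {ω | v (S ω) = 1} := Set.ext fun ω => by
    simpa [S] using lt_sup_inf_iff_filter_mem (𝒜 := univ.filter (fun A => v A = 1))
      (fun A B hAB hA => by simpa using hup A B hAB (by simpa using hA)) (by simpa using hempty)
      (T · ω) t
  simp only [← measureReal_def, hsystem, hsurvive]
  exact measureReal_eq_sum_mobiusTransform_mul μ S hS v hv hup

/-- Primal Möbius reliability formula:
`R_S(t) = Σ_A m_v(A) · P(∀ i ∈ A, T_i > t)`. -/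
theorem reliability_mobius {n : ℕ} {Ω : Type*} [MeasurableSpace Ω]
    (μ : MeasureTheory.Measure Ω) [MeasureTheory.IsProbabilityMeasure μ]
    (T : Fin n → Ω → ℝ≥0∞) (hT : ∀ i, Measurable (T i))
    (v : Finset (Fin n) → ℤ)
    (hv : ∀ A, v A = 0 ∨ v A = 1)
    (hmono : ∀ A B : Finset (Fin n), A ⊆ B → v A ≤ v B)
    (hnonconst : ∃ A B : Finset (Fin n), v A ≠ v B)
    (t : ℝ≥0∞) (ht : 0 ≤ t) :
    (μ {ω | (Finset.univ.filter (fun A : Finset (Fin n) => v A = 1)).sup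
        (fun A => A.inf (fun i => T i ω)) > t}).toReal =
      ∑ A : Finset (Fin n), (mobiusTransform v A : ℝ) *
        (μ {ω | ∀ i ∈ A, T i ω > t}).toReal :=
  reliability_mobius_general μ T hT v hv hmono hnonconst t
end
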